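/- Let f, n, m be natural numbers with n > 3f and m ≥ n − f. Let P be a multiset of real numbers with card P = n and let U be a sub-multiset of P with card U = m. Let x ∈ U and let b be a real number. If the destination D(x, P) = (min(x, P_(f+1)) + max(x, P_(n−f)))/2 satisfies D(x, P) < min U + b, then at least m − f elements of U (counted with multiplicity) are strictly smaller than min U + 2b; equivalently, the number of elements of U that are ≥ min U + 2b is at most f. -/

import Mathlib

/-- The k-th smallest element (1-indexed, counted with multiplicity) of a
multiset of real numbers. -/
noncomputable def nth (S : Multiset ℝ) (k : ℕ) : ℝ :=
  (S.sort (· ≤ ·)).getD (k - 1) 0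

/-- The smallest element of a (nonempty) multiset of reals. -/
noncomputable def mmin (S : Multiset ℝ) : ℝ := nth S 1

/-- The largest element of a (nonempty) multiset of reals. -/
noncomputable def mmax (S : Multiset ℝ) : ℝ := nth S S.card

/-- The diameter of a (nonempty) multiset of reals. -/
noncomputable def mdiam (S : Multiset ℝ) : ℝ := mmax S - mmin S

/-!
Every correct position is at least `u = min U`, and at most `n - m ≤ f` positions of `P` are not
correct, so `P_(f+1) ≥ u` and therefore `min(x, P_(f+1)) ≥ u`. The hypothesis on the destination
then forces `P_(n-f) < u + 2b`, so at most `f` elements of `P`, and a fortiori of `U`, are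
`≥ u + 2b`.
-/

open Multiset

lemma Multiset.card_filter_lt_add_card_filter_le (S : Multiset ℝ) (c : ℝ) :
    card (S.filter (· < c)) + card (S.filter (c ≤ ·)) = card S := by
  simp_rw [← not_lt]
  rw [← card_add, filter_add_not]

lemma nth_succ_eq_getElem {S : Multiset ℝ} {k : ℕ} (hk : k < card S) :
    nth S (k + 1) = (S.sort (· ≤ ·))[k]'(by simpa using hk) := by
  simp [nth, List.getD_eq_getElem?_getD, hk]

lemma mmin_le_of_mem {S : Multiset ℝ} {y : ℝ} (hy : y ∈ S) : mmin S ≤ y := by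
  rw [← mem_sort (· ≤ ·)] at hy
  obtain ⟨i, hi, rfl⟩ := List.getElem_of_mem hy
  rw [mmin, nth_succ_eq_getElem (k := 0) (by simpa using (Nat.zero_le i).trans_lt hi)]
  exact (S.pairwise_sort (· ≤ ·)).rel_get_of_le (Nat.zero_le i)

lemma succ_le_card_filter_lt_of_nth_succ_lt {S : Multiset ℝ} {k : ℕ} {c : ℝ}
    (hk : k < card S) (h : nth S (k + 1) < c) : k + 1 ≤ card (S.filter (· < c)) := by
  set L := S.sort (· ≤ ·)
  have hkL : k < L.length := by simpa [L] using hk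
  have hprefix : (L.take (k + 1) : Multiset ℝ) ≤ S.filter (· < c) := by
    refine le_filter.2 ⟨?_, fun y hy => ?_⟩
    · exact (S.sort_eq (· ≤ ·)) ▸ coe_le.2 (L.take_sublist _).subperm
    · obtain ⟨i, hi, rfl⟩ := List.mem_take_iff_getElem.1 (mem_coe.1 hy)
      rw [nth_succ_eq_getElem hk] at h
      exact ((S.pairwise_sort (· ≤ ·)).rel_get_of_le (by omega : i ≤ k)).trans_lt h
  have := card_le_card hprefix
  rw [coe_card, List.length_take] at this
  omega

lemma card_filter_le_le_sub_of_nth_succ_lt {S : Multiset ℝ} {k : ℕ} {c : ℝ}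
    (hk : k < card S) (h : nth S (k + 1) < c) : card (S.filter (c ≤ ·)) ≤ card S - (k + 1) := by
  have := S.card_filter_lt_add_card_filter_le c
  have := succ_le_card_filter_lt_of_nth_succ_lt hk h
  omega

lemma le_nth_succ_of_card_filter_lt_le {S : Multiset ℝ} {k : ℕ} {c : ℝ}
    (hk : k < card S) (h : card (S.filter (· < c)) ≤ k) : c ≤ nth S (k + 1) := by
  by_contra! hlt
  have := succ_le_card_filter_lt_of_nth_succ_lt hk hlt
  omega

lemma card_filter_lt_le_sub_card {U P : Multiset ℝ} {c : ℝ} (hU : U ≤ P) (hc : ∀ y ∈ U, c ≤ y) :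
    card (P.filter (· < c)) ≤ card P - card U := by
  have := card_le_card (le_filter.2 ⟨hU, hc⟩ : U ≤ P.filter (c ≤ ·))
  have := P.card_filter_lt_add_card_filter_le c
  omega

theorem stmt10 (f n m : ℕ) (P U : Multiset ℝ) (x b : ℝ)
    (hn : n > 3 * f) (hm : m ≥ n - f)
    (hP : Multiset.card P = n) (hU : U ≤ P) (hUm : Multiset.card U = m)
    (hx : x ∈ U)
    (hD : (min x (nth P (f + 1)) + max x (nth P (n - f))) / 2 < mmin U + b) :
    Multiset.card (U.filter (fun y => y < mmin U + 2 * b)) ≥ m - f ∧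
    Multiset.card (U.filter (fun y => mmin U + 2 * b ≤ y)) ≤ f := by
  set u := mmin U
  have hmn : m ≤ n := hP ▸ hUm ▸ card_le_card hU
  have hlow : card (P.filter (· < u)) ≤ f :=
    (card_filter_lt_le_sub_card hU fun _ => mmin_le_of_mem).trans (by omega)
  have hu_le : u ≤ min x (nth P (f + 1)) :=
    le_min (mmin_le_of_mem hx) (le_nth_succ_of_card_filter_lt_le (by omega) hlow)
  have hPnf : nth P (n - f - 1 + 1) < u + 2 * b := by
    rw [Nat.sub_add_cancel (by omega)]
    linarith [le_max_right x (nth P (n - f))]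
  have hhigh : card (U.filter (u + 2 * b ≤ ·)) ≤ f :=
    (card_le_card (filter_le_filter _ hU)).trans <|
      (card_filter_le_le_sub_of_nth_succ_lt (by omega) hPnf).trans (by omega)
  have hsplit := U.card_filter_lt_add_card_filter_le (u + 2 * b)
  exact ⟨by omega, hhigh⟩
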